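/- arXiv:2305.12229 — 9 statements merged into one kernel-verified Lean document; each statement's English description precedes it below -/
import Mathlib

section
/- Let v > 0, j ∈ ℝ, let α : (0,∞) → ℝ be twice differentiable with α(1/v) > 0, and let ε_vv, ε_vη, ε_ηη ∈ ℝ. Consider the symmetric 4×4 matrix M with rows: (1, 0, 0, 0); (0, ε_ηη, 0, ε_vη); (0, 0, α(1/v)/v, −j(α'(1/v) + v·α(1/v))/v²); (0, ε_vη, −j(α'(1/v) + v·α(1/v))/v², ε_vv + (j²/(2v³))·(α''(1/v) + 4v·α'(1/v) + 2v²·α(1/v))). If ε_ηη > 0 and (α(1/v)·α''(1/v) − 2α'(1/v)²)·(j²/(2v³))·ε_ηη + α(1/v)·(ε_vv·ε_ηη − ε_vη²) > 0, then M is positive definite. -/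
/-!
Completing squares, the quadratic form of the arrowhead matrix with diagonal `d, p, q, t` and
last row `0, r, s, t` is
`d x₀² + p (x₁ + r/p x₃)² + q (x₂ + s/q x₃)² + (t - r²/p - s²/q) x₃²`.
For the Hessian, `p = ε_ηη`, `q = α/v`, and the Schur complement `t - r²/p - s²/q` equals the
left-hand side of the determinant condition divided by `α ε_ηη`.
-/

open Matrix

theorem Matrix.posDef_arrowhead_of_pos {d p q r s t : ℝ} (hd : 0 < d) (hp : 0 < p) (hq : 0 < q)
    (hschur : 0 < t - r ^ 2 / p - s ^ 2 / q) :
    (!![d, 0, 0, 0; 0, p, 0, r; 0, 0, q, s; 0, r, s, t] : Matrix (Fin 4) (Fin 4) ℝ).PosDef := by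
  refine .of_dotProduct_mulVec_pos ?_ fun x hx => ?_
  · ext i k
    fin_cases i <;> fin_cases k <;> rfl
  set K := t - r ^ 2 / p - s ^ 2 / q
  have hform : star x ⬝ᵥ (!![d, 0, 0, 0; 0, p, 0, r; 0, 0, q, s; 0, r, s, t] *ᵥ x) =
      d * x 0 ^ 2 + p * (x 1 + r / p * x 3) ^ 2 + q * (x 2 + s / q * x 3) ^ 2 + K * x 3 ^ 2 := by
    simp only [K, dotProduct, Pi.star_apply, star_trivial, mulVec, of_apply, cons_val',
      cons_val_fin_one, Fin.sum_univ_four, cons_val_zero, cons_val_one, cons_val, zero_mul,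
      add_zero, zero_add]
    field_simp
    ring
  have eq_zero_of_mul_sq_nonpos {c : ℝ} (y : ℝ) (hc : 0 < c) (h : c * y ^ 2 ≤ 0) : y = 0 := by
    by_contra hy
    have : 0 < c * y ^ 2 := by positivity
    linarith
  rw [hform]
  by_contra! hle
  have n0 : 0 ≤ d * x 0 ^ 2 := by positivity
  have n1 : 0 ≤ p * (x 1 + r / p * x 3) ^ 2 := by positivity
  have n2 : 0 ≤ q * (x 2 + s / q * x 3) ^ 2 := by positivity
  have n3 : 0 ≤ K * x 3 ^ 2 := by positivity
  have h0 := eq_zero_of_mul_sq_nonpos (x 0) hd (by linarith)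
  have h1 := eq_zero_of_mul_sq_nonpos _ hp (show p * (x 1 + r / p * x 3) ^ 2 ≤ 0 by linarith)
  have h2 := eq_zero_of_mul_sq_nonpos _ hq (show q * (x 2 + s / q * x 3) ^ 2 ≤ 0 by linarith)
  have h3 := eq_zero_of_mul_sq_nonpos (x 3) hschur (by linarith)
  refine hx (funext fun i => ?_)
  fin_cases i <;> simp_all

lemma energy_hessian_schur_complement_eq {v j a b c εvv εvη εηη : ℝ} (hv : v ≠ 0) (ha : a ≠ 0)
    (hεηη : εηη ≠ 0) :
    εvv + j ^ 2 / (2 * v ^ 3) * (c + 4 * v * b + 2 * v ^ 2 * a) - εvη ^ 2 / εηη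
        - (-j * (b + v * a) / v ^ 2) ^ 2 / (a / v) =
      ((a * c - 2 * b ^ 2) * (j ^ 2 / (2 * v ^ 3)) * εηη + a * (εvv * εηη - εvη ^ 2))
        / (a * εηη) := by
  field_simp
  ring

theorem stmt_2_general (v j εvv εvη εηη : ℝ) (hv : 0 < v)
    (α α' α'' : ℝ → ℝ)
    (hαpos : 0 < α (1 / v))
    (hεηη : 0 < εηη)
    (hdet : 0 < (α (1 / v) * α'' (1 / v) - 2 * (α' (1 / v)) ^ 2) * (j ^ 2 / (2 * v ^ 3)) * εηη
      + α (1 / v) * (εvv * εηη - εvη ^ 2)) :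
    (!![1, 0, 0, 0;
        0, εηη, 0, εvη;
        0, 0, α (1 / v) / v, -j * (α' (1 / v) + v * α (1 / v)) / v ^ 2;
        0, εvη, -j * (α' (1 / v) + v * α (1 / v)) / v ^ 2,
          εvv + (j ^ 2 / (2 * v ^ 3)) *
            (α'' (1 / v) + 4 * v * α' (1 / v) + 2 * v ^ 2 * α (1 / v))] :
      Matrix (Fin 4) (Fin 4) ℝ).PosDef := by
  refine Matrix.posDef_arrowhead_of_pos one_pos hεηη (div_pos hαpos hv) ?_
  rw [energy_hessian_schur_complement_eq hv.ne' hαpos.ne' hεηη.ne']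
  exact div_pos hdet (mul_pos hαpos hεηη)

/-- Positive definiteness of the Hessian of the specific total energy
`e(u, vj, η, v) = u²/2 + (α(1/v)/(2v))(vj)² + ε(v,η)` in the variables `(u, vj, η, v)`,
under the Sylvester conditions `ε_ηη > 0` and
`(α α'' − 2α'²)(j²/(2v³))ε_ηη + α (ε_vv ε_ηη − ε_vη²) > 0` (evaluated at `1/v`). -/
theorem stmt_2 (v j εvv εvη εηη : ℝ) (hv : 0 < v)
    (α α' α'' : ℝ → ℝ)
    (hα' : ∀ x ∈ Set.Ioi (0 : ℝ), HasDerivAt α (α' x) x)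
    (hα'' : ∀ x ∈ Set.Ioi (0 : ℝ), HasDerivAt α' (α'' x) x)
    (hαpos : 0 < α (1 / v))
    (hεηη : 0 < εηη)
    (hdet : 0 < (α (1 / v) * α'' (1 / v) - 2 * (α' (1 / v)) ^ 2) * (j ^ 2 / (2 * v ^ 3)) * εηη
      + α (1 / v) * (εvv * εηη - εvη ^ 2)) :
    (!![1, 0, 0, 0;
        0, εηη, 0, εvη;
        0, 0, α (1 / v) / v, -j * (α' (1 / v) + v * α (1 / v)) / v ^ 2;
        0, εvη, -j * (α' (1 / v) + v * α (1 / v)) / v ^ 2,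
          εvv + (j ^ 2 / (2 * v ^ 3)) *
            (α'' (1 / v) + 4 * v * α' (1 / v) + 2 * v ^ 2 * α (1 / v))] :
      Matrix (Fin 4) (Fin 4) ℝ).PosDef :=
  stmt_2_general v j εvv εvη εηη hv α α' α'' hαpos hεηη hdet
end

section
/- Let α : (0,∞) → ℝ be twice continuously differentiable with α(ρ) > 0 for all ρ > 0 and with ρ ↦ 1/α(ρ) concave on (0,∞), and let ε : (0,∞) × ℝ → ℝ be a twice continuously differentiable convex function. Then the specific energy e(u, w, η, v) = u²/2 + (α(1/v)/(2v))·w² + ε(v,η) is a convex function of (u, w, η, v) on ℝ × ℝ × ℝ × (0,∞). -/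
/-!
Only the middle term needs an argument. It equals `w² / (2 φ v)` with
`φ v = v / α (1/v) = v · (1/α) (1/v)`, the perspective of the concave function `1/α`, so `φ` is
concave and positive on `(0,∞)`. Since `(w, t) ↦ w² / t` is jointly convex and antitone in `t > 0`,
its composition with `(v, w) ↦ (w, φ v)` is convex.
-/

open Set

theorem convexOn_sq_div : ConvexOn ℝ (univ ×ˢ Ioi 0) fun p : ℝ × ℝ => p.1 ^ 2 / p.2 := by
  refine ⟨convex_univ.prod (convex_Ioi 0), ?_⟩
  rintro ⟨w₁, t₁⟩ ⟨-, ht₁ : 0 < t₁⟩ ⟨w₂, t₂⟩ ⟨-, ht₂ : 0 < t₂⟩ a b ha hb hab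
  have ht : 0 < a * t₁ + b * t₂ := convex_Ioi (0 : ℝ) ht₁ ht₂ ha hb hab
  simp only [Prod.smul_mk, Prod.mk_add_mk, smul_eq_mul]
  have hgap : a * (w₁ ^ 2 / t₁) + b * (w₂ ^ 2 / t₂) - (a * w₁ + b * w₂) ^ 2 / (a * t₁ + b * t₂)
      = a * b * (w₁ * t₂ - w₂ * t₁) ^ 2 / (t₁ * t₂ * (a * t₁ + b * t₂)) := by
    field_simp
    ring
  have : 0 ≤ a * b * (w₁ * t₂ - w₂ * t₁) ^ 2 / (t₁ * t₂ * (a * t₁ + b * t₂)) := by positivity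
  linarith

theorem ConcaveOn.convexOn_sq_div {E : Type*} [AddCommGroup E] [Module ℝ E] {s : Set E}
    {φ : E → ℝ} (hφ : ConcaveOn ℝ s φ) (hpos : ∀ x ∈ s, 0 < φ x) :
    ConvexOn ℝ (s ×ˢ univ) fun p : E × ℝ => p.2 ^ 2 / φ p.1 := by
  refine ⟨hφ.1.prod convex_univ, ?_⟩
  rintro ⟨v₁, w₁⟩ ⟨hv₁, -⟩ ⟨v₂, w₂⟩ ⟨hv₂, -⟩ a b ha hb hab
  have hφ₁ : 0 < φ v₁ := hpos _ hv₁
  have hφ₂ : 0 < φ v₂ := hpos _ hv₂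
  simp only [Prod.smul_mk, Prod.mk_add_mk, smul_eq_mul]
  calc (a * w₁ + b * w₂) ^ 2 / φ (a • v₁ + b • v₂)
      ≤ (a * w₁ + b * w₂) ^ 2 / (a * φ v₁ + b * φ v₂) :=
        div_le_div_of_nonneg_left (sq_nonneg _) (convex_Ioi (0 : ℝ) hφ₁ hφ₂ ha hb hab)
          (hφ.2 hv₁ hv₂ ha hb hab)
    _ ≤ a * (w₁ ^ 2 / φ v₁) + b * (w₂ ^ 2 / φ v₂) :=
        _root_.convexOn_sq_div.2 (x := (w₁, φ v₁)) (y := (w₂, φ v₂)) ⟨trivial, hφ₁⟩ ⟨trivial, hφ₂⟩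
          ha hb hab

theorem ConcaveOn.mul_comp_inv {g : ℝ → ℝ} (hg : ConcaveOn ℝ (Ioi 0) g) :
    ConcaveOn ℝ (Ioi 0) fun v => v * g v⁻¹ := by
  refine ⟨convex_Ioi 0, ?_⟩
  rintro v₁ (hv₁ : 0 < v₁) v₂ (hv₂ : 0 < v₂) a b ha hb hab
  have hs : 0 < a * v₁ + b * v₂ := convex_Ioi (0 : ℝ) hv₁ hv₂ ha hb hab
  set s := a * v₁ + b * v₂
  have hconc := hg.2 (inv_pos.2 hv₁) (inv_pos.2 hv₂) (by positivity : 0 ≤ a * v₁ / s)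
    (by positivity : 0 ≤ b * v₂ / s) (by rw [← add_div, div_self hs.ne'])
  have hcomb : a * v₁ / s * v₁⁻¹ + b * v₂ / s * v₂⁻¹ = s⁻¹ := by
    field_simp
    exact hab
  simp only [smul_eq_mul, hcomb] at hconc ⊢
  calc a * (v₁ * g v₁⁻¹) + b * (v₂ * g v₂⁻¹)
      = s * (a * v₁ / s * g v₁⁻¹ + b * v₂ / s * g v₂⁻¹) := by field_simp
    _ ≤ s * g s⁻¹ := by gcongr

theorem convexOn_impulse_energy {α : ℝ → ℝ} (hαpos : ∀ ρ ∈ Ioi (0 : ℝ), 0 < α ρ)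
    (hconc : ConcaveOn ℝ (Ioi 0) fun ρ => 1 / α ρ) :
    ConvexOn ℝ (Ioi 0 ×ˢ univ) fun p : ℝ × ℝ => α (1 / p.1) / (2 * p.1) * p.2 ^ 2 := by
  have hpos : ∀ v ∈ Ioi (0 : ℝ), 0 < v * (1 / α v⁻¹) := fun v (hv : 0 < v) => by
    have := hαpos _ (inv_pos.2 hv)
    positivity
  refine ((hconc.mul_comp_inv.convexOn_sq_div hpos).smul (by norm_num : (0 : ℝ) ≤ 1 / 2)).congr
    fun p _ => ?_
  simp only [smul_eq_mul, div_eq_mul_inv, one_mul, mul_inv, inv_inv]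
  ring

theorem stmt_3_general (α : ℝ → ℝ) (ε : ℝ × ℝ → ℝ)
    (hαpos : ∀ ρ ∈ Set.Ioi (0 : ℝ), 0 < α ρ)
    (hconc : ConcaveOn ℝ (Set.Ioi 0) (fun ρ => 1 / α ρ))
    (hεconv : ConvexOn ℝ (Set.Ioi 0 ×ˢ Set.univ) ε) :
    ConvexOn ℝ {x : ℝ × ℝ × ℝ × ℝ | 0 < x.2.2.2}
      (fun x => x.1 ^ 2 / 2 + (α (1 / x.2.2.2) / (2 * x.2.2.2)) * x.2.1 ^ 2
        + ε (x.2.2.2, x.2.2.1)) := by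
  have hS : Convex ℝ {x : ℝ × ℝ × ℝ × ℝ | 0 < x.2.2.2} :=
    convex_halfSpace_gt ⟨fun _ _ => rfl, fun _ _ => rfl⟩ 0
  let πu : ℝ × ℝ × ℝ × ℝ →ₗ[ℝ] ℝ := LinearMap.fst ℝ ℝ (ℝ × ℝ × ℝ)
  let πvw : ℝ × ℝ × ℝ × ℝ →ₗ[ℝ] ℝ × ℝ :=
    { toFun x := (x.2.2.2, x.2.1), map_add' _ _ := rfl, map_smul' _ _ := rfl }
  let πvη : ℝ × ℝ × ℝ × ℝ →ₗ[ℝ] ℝ × ℝ :=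
    { toFun x := (x.2.2.2, x.2.2.1), map_add' _ _ := rfl, map_smul' _ _ := rfl }
  have hkin : ConvexOn ℝ univ fun u : ℝ => u ^ 2 / 2 :=
    (even_two.convexOn_pow.smul (by norm_num : (0 : ℝ) ≤ 1 / 2)).congr fun u _ => by
      simp only [smul_eq_mul]; ring
  exact (((hkin.comp_linearMap πu).subset (fun _ _ => trivial) hS).add
    (((convexOn_impulse_energy hαpos hconc).comp_linearMap πvw).subset
      (fun _ hx => ⟨hx, trivial⟩) hS)).add
    ((hεconv.comp_linearMap πvη).subset (fun _ hx => ⟨hx, trivial⟩) hS)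

/-- If `α : (0,∞) → ℝ` is twice continuously differentiable, positive, with `1/α` concave,
and `ε(v,η)` is a twice continuously differentiable convex function, then the specific energy
`e(u, w, η, v) = u²/2 + (α(1/v)/(2v))·w² + ε(v,η)` is convex on `ℝ × ℝ × ℝ × (0,∞)`. -/
theorem stmt_3 (α : ℝ → ℝ) (ε : ℝ × ℝ → ℝ)
    (hα : ContDiffOn ℝ 2 α (Set.Ioi 0))
    (hαpos : ∀ ρ ∈ Set.Ioi (0 : ℝ), 0 < α ρ)
    (hconc : ConcaveOn ℝ (Set.Ioi 0) (fun ρ => 1 / α ρ))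
    (hε : ContDiffOn ℝ 2 ε (Set.Ioi 0 ×ˢ Set.univ))
    (hεconv : ConvexOn ℝ (Set.Ioi 0 ×ˢ Set.univ) ε) :
    ConvexOn ℝ {x : ℝ × ℝ × ℝ × ℝ | 0 < x.2.2.2}
      (fun x => x.1 ^ 2 / 2 + (α (1 / x.2.2.2) / (2 * x.2.2.2)) * x.2.1 ^ 2
        + ε (x.2.2.2, x.2.2.1)) :=
  stmt_3_general α ε hαpos hconc hεconv
end

section
/- Let d ≥ 1, let α : (0,∞) → ℝ be twice continuously differentiable with α(ρ) > 0 for all ρ > 0 and with ρ ↦ 1/α(ρ) concave on (0,∞), and let ε : (0,∞) × ℝ → ℝ be a twice continuously differentiable convex function of (v, η). Then the total volumetric energy E(ρ, m, s, j) = ‖m‖²/(2ρ) + ρ·ε(1/ρ, s/ρ) + (α(ρ)/2)·‖j‖² is a convex function of Q = (ρ, m, s, j) on (0,∞) × ℝ^d × ℝ × ℝ^d. -/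
/-!
All three summands are jointly convex in `Q = (ρ, m, s, j)`. The kinetic and thermal energies have
the form `‖y‖² / g ρ` with `g` concave and positive (`g ρ = 2ρ`, resp. `g ρ = 2 / α ρ`): since
`(y, t) ↦ ‖y‖² / t` is jointly convex and decreasing in `t > 0`, precomposing with a concave `g`
keeps it convex. The internal energy `ρ ε(1/ρ, s/ρ) = ρ ε(ρ⁻¹ • (1, s))` is the perspective of
the convex function `ε`, evaluated along an affine map of `Q`.
-/

open Set

lemma add_sq_div_add_le {a b x y β γ : ℝ} (ha : 0 ≤ a) (hb : 0 ≤ b) (hβ : 0 < β) (hγ : 0 < γ) :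
    (a * x + b * y) ^ 2 / (a * β + b * γ) ≤ a * (x ^ 2 / β) + b * (y ^ 2 / γ) := by
  rcases (add_nonneg (mul_nonneg ha hβ.le) (mul_nonneg hb hγ.le)).eq_or_lt with h | h
  · rw [← h, div_zero]
    positivity
  have hrhs : a * (x ^ 2 / β) + b * (y ^ 2 / γ) = (a * x ^ 2 * γ + b * y ^ 2 * β) / (β * γ) := by
    field_simp
  rw [hrhs, div_le_div_iff₀ h (by positivity)]
  nlinarith [mul_nonneg (mul_nonneg ha hb) (sq_nonneg (x * γ - y * β))]

section

variable {V E F : Type*} [AddCommGroup V] [Module ℝ V] [SeminormedAddCommGroup E]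
  [NormedSpace ℝ E] [AddCommGroup F] [Module ℝ F]

theorem ConcaveOn.convexOn_norm_sq_div {s : Set V} {g : V → ℝ} (hg : ConcaveOn ℝ s g)
    (hg_pos : ∀ x ∈ s, 0 < g x) :
    ConvexOn ℝ (s ×ˢ univ) (fun p : V × E => ‖p.2‖ ^ 2 / g p.1) := by
  refine ⟨hg.1.prod convex_univ, ?_⟩
  rintro ⟨x, y⟩ ⟨hx, -⟩ ⟨x', y'⟩ ⟨hx', -⟩ a b ha hb hab
  have hgx := hg_pos x hx
  have hgx' := hg_pos x' hx'
  have hcombo_pos : 0 < a * g x + b * g x' := convex_Ioi (0 : ℝ) hgx hgx' ha hb hab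
  have hnorm : ‖a • y + b • y'‖ ≤ a * ‖y‖ + b * ‖y'‖ :=
    (convexOn_norm convex_univ).2 trivial trivial ha hb hab
  simp only [Prod.smul_mk, Prod.mk_add_mk, smul_eq_mul]
  calc ‖a • y + b • y'‖ ^ 2 / g (a • x + b • x')
      ≤ (a * ‖y‖ + b * ‖y'‖) ^ 2 / (a * g x + b * g x') :=
        div_le_div₀ (by positivity) (by gcongr) hcombo_pos (hg.2 hx hx' ha hb hab)
    _ ≤ a * (‖y‖ ^ 2 / g x) + b * (‖y'‖ ^ 2 / g x') := add_sq_div_add_le ha hb hgx hgx'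

lemma inv_smul_add_smul_eq {ρ ρ' : ℝ} (hρ : ρ ≠ 0) (hρ' : ρ' ≠ 0) (a b : ℝ) (x x' : F) :
    (a * ρ + b * ρ')⁻¹ • (a • x + b • x')
      = (a * ρ / (a * ρ + b * ρ')) • ρ⁻¹ • x + (b * ρ' / (a * ρ + b * ρ')) • ρ'⁻¹ • x' := by
  simp only [smul_add, smul_smul]
  congr 2 <;> field_simp

theorem ConvexOn.perspective {t : Set F} {f : F → ℝ} (hf : ConvexOn ℝ t f) :
    ConvexOn ℝ {p : ℝ × F | 0 < p.1 ∧ p.1⁻¹ • p.2 ∈ t} (fun p => p.1 * f (p.1⁻¹ • p.2)) := by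
  set S := {p : ℝ × F | 0 < p.1 ∧ p.1⁻¹ • p.2 ∈ t}
  have key : ∀ ⦃p⦄, p ∈ S → ∀ ⦃q⦄, q ∈ S → ∀ ⦃a b : ℝ⦄, 0 ≤ a → 0 ≤ b → a + b = 1 →
      a • p + b • q ∈ S ∧ (a • p + b • q).1 * f ((a • p + b • q).1⁻¹ • (a • p + b • q).2)
        ≤ a • (p.1 * f (p.1⁻¹ • p.2)) + b • (q.1 * f (q.1⁻¹ • q.2)) := by
    rintro ⟨ρ, x⟩ ⟨hρ, hx⟩ ⟨ρ', x'⟩ ⟨hρ', hx'⟩ a b ha hb hab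
    have hr : 0 < a * ρ + b * ρ' := convex_Ioi (0 : ℝ) hρ hρ' ha hb hab
    have hc : 0 ≤ a * ρ / (a * ρ + b * ρ') := by positivity
    have hd : 0 ≤ b * ρ' / (a * ρ + b * ρ') := by positivity
    have hcd : a * ρ / (a * ρ + b * ρ') + b * ρ' / (a * ρ + b * ρ') = 1 := by
      rw [← add_div, div_self hr.ne']
    simp only [S, mem_ofPred_eq, Prod.smul_mk, Prod.mk_add_mk, smul_eq_mul]
    rw [inv_smul_add_smul_eq hρ.ne' hρ'.ne']
    set r := a * ρ + b * ρ'
    refine ⟨⟨hr, hf.1 hx hx' hc hd hcd⟩, ?_⟩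
    calc r * f ((a * ρ / r) • ρ⁻¹ • x + (b * ρ' / r) • ρ'⁻¹ • x')
        ≤ r * ((a * ρ / r) * f (ρ⁻¹ • x) + (b * ρ' / r) * f (ρ'⁻¹ • x')) :=
          mul_le_mul_of_nonneg_left (hf.2 hx hx' hc hd hcd) hr.le
      _ = a * (ρ * f (ρ⁻¹ • x)) + b * (ρ' * f (ρ'⁻¹ • x')) := by
          field_simp
  exact ⟨fun p hp q hq a b ha hb hab => (key hp hq ha hb hab).1,
    fun p hp q hq a b ha hb hab => (key hp hq ha hb hab).2⟩

end

theorem stmt_4_general (d : ℕ) (α : ℝ → ℝ) (ε : ℝ × ℝ → ℝ)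
    (hαpos : ∀ ρ ∈ Set.Ioi (0 : ℝ), 0 < α ρ)
    (hconc : ConcaveOn ℝ (Set.Ioi 0) (fun ρ => 1 / α ρ))
    (hεconv : ConvexOn ℝ (Set.Ioi 0 ×ˢ Set.univ) ε) :
    ConvexOn ℝ {Q : ℝ × EuclideanSpace ℝ (Fin d) × ℝ × EuclideanSpace ℝ (Fin d) | 0 < Q.1}
      (fun Q => ‖Q.2.1‖ ^ 2 / (2 * Q.1) + Q.1 * ε (1 / Q.1, Q.2.2.1 / Q.1)
        + (α Q.1 / 2) * ‖Q.2.2.2‖ ^ 2) := by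
  set D := {Q : ℝ × EuclideanSpace ℝ (Fin d) × ℝ × EuclideanSpace ℝ (Fin d) | 0 < Q.1}
  have hD : Convex ℝ D := convex_halfSpace_gt (LinearMap.fst ℝ ℝ _).isLinear 0
  have kinetic : ConvexOn ℝ D (fun Q => ‖Q.2.1‖ ^ 2 / (2 * Q.1)) := by
    have h := ((concaveOn_id (convex_Ioi 0)).smul zero_le_two).convexOn_norm_sq_div
      (E := EuclideanSpace ℝ (Fin d)) fun ρ hρ => mul_pos two_pos hρ
    exact (h.comp_linearMap ((LinearMap.fst ℝ ℝ _).prod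
      (LinearMap.fst ℝ _ _ ∘ₗ LinearMap.snd ℝ ℝ _))).subset (fun Q hQ => ⟨hQ, trivial⟩) hD
  have internal : ConvexOn ℝ D (fun Q => Q.1 * ε (1 / Q.1, Q.2.2.1 / Q.1)) := by
    refine ((hεconv.perspective.comp_affineMap
      (((LinearMap.fst ℝ ℝ _).prod ((0 : _ →ₗ[ℝ] ℝ).prod
        (LinearMap.fst ℝ ℝ _ ∘ₗ LinearMap.snd ℝ _ _ ∘ₗ LinearMap.snd ℝ ℝ _))).toAffineMap
        + AffineMap.const ℝ _ ((0 : ℝ), ((1 : ℝ), (0 : ℝ))))).subset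
      (fun Q hQ => by simpa [D] using hQ) hD).congr fun Q _ => ?_
    simp [div_eq_inv_mul]
  have thermal : ConvexOn ℝ D (fun Q => (α Q.1 / 2) * ‖Q.2.2.2‖ ^ 2) := by
    have h := (hconc.smul zero_le_two).convexOn_norm_sq_div (E := EuclideanSpace ℝ (Fin d))
      fun ρ hρ => mul_pos two_pos (one_div_pos.2 (hαpos ρ hρ))
    refine ((h.comp_linearMap ((LinearMap.fst ℝ ℝ _).prod
      (LinearMap.snd ℝ _ _ ∘ₗ LinearMap.snd ℝ _ _ ∘ₗ LinearMap.snd ℝ ℝ _))).subset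
      (fun Q hQ => ⟨hQ, trivial⟩) hD).congr fun Q _ => ?_
    show ‖Q.2.2.2‖ ^ 2 / (2 * (1 / α Q.1)) = _
    rw [mul_one_div, div_div_eq_mul_div]
    ring
  exact (kinetic.add internal).add thermal

/-- If `α : (0,∞) → ℝ` is twice continuously differentiable, positive, with `1/α` concave, and
`ε(v,η)` is a twice continuously differentiable convex function, then the total volumetric
energy `E(ρ, m, s, j) = ‖m‖²/(2ρ) + ρ·ε(1/ρ, s/ρ) + (α(ρ)/2)‖j‖²` is convex on
`(0,∞) × ℝ^d × ℝ × ℝ^d`. -/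
theorem stmt_4 (d : ℕ) (hd : 1 ≤ d) (α : ℝ → ℝ) (ε : ℝ × ℝ → ℝ)
    (hα : ContDiffOn ℝ 2 α (Set.Ioi 0))
    (hαpos : ∀ ρ ∈ Set.Ioi (0 : ℝ), 0 < α ρ)
    (hconc : ConcaveOn ℝ (Set.Ioi 0) (fun ρ => 1 / α ρ))
    (hε : ContDiffOn ℝ 2 ε (Set.Ioi 0 ×ˢ Set.univ))
    (hεconv : ConvexOn ℝ (Set.Ioi 0 ×ˢ Set.univ) ε) :
    ConvexOn ℝ {Q : ℝ × EuclideanSpace ℝ (Fin d) × ℝ × EuclideanSpace ℝ (Fin d) | 0 < Q.1}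
      (fun Q => ‖Q.2.1‖ ^ 2 / (2 * Q.1) + Q.1 * ε (1 / Q.1, Q.2.2.1 / Q.1)
        + (α Q.1 / 2) * ‖Q.2.2.2‖ ^ 2) :=
  stmt_4_general d α ε hαpos hconc hεconv
end

section
/- Let n ≥ 1, let A, B, C be real symmetric n×n matrices with A positive definite and C negative semidefinite, let k > 0 be real, let c ∈ ℂ and let U ∈ ℂⁿ be nonzero, such that (−c·A + B + (i/k)·C)·U = 0. Then the imaginary part of c satisfies Im(c) = Re(U* C U)/(k · U* A U) ≤ 0, where U* denotes the conjugate transpose. -/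
/-!
Pairing the equation with `U` gives the scalar relation `-c a + b + (i/k) γ = 0` for
`a = U* A U`, `b = U* B U`, `γ = U* C U`. These are real since real symmetric matrices are
Hermitian over `ℂ`, and `a > 0`, `γ ≤ 0` since definiteness of a real matrix persists over `ℂ`:
the real part of `U* M U` is the sum of the real quadratic forms of `Re U` and `Im U`.
Taking imaginary parts leaves `Im c · a = γ / k`.
-/

open scoped Matrix ComplexOrder

namespace Matrix

lemma IsHermitian.map_ofReal {n : Type*} {M : Matrix n n ℝ} (hM : M.IsHermitian) :
    (M.map ((↑) : ℝ → ℂ)).IsHermitian :=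
  hM.map _ fun r => (Complex.conj_ofReal r).symm

variable {n : Type*} [Fintype n]

lemma re_star_dotProduct_map_ofReal_mulVec (M : Matrix n n ℝ) (x : n → ℂ) :
    (star x ⬝ᵥ M.map ((↑) : ℝ → ℂ) *ᵥ x).re =
      (fun i => (x i).re) ⬝ᵥ M *ᵥ (fun i => (x i).re) +
        (fun i => (x i).im) ⬝ᵥ M *ᵥ (fun i => (x i).im) := by
  simp only [dotProduct, mulVec, map_apply, Pi.star_apply, Finset.mul_sum,
    ← Finset.sum_add_distrib, Complex.re_sum]
  refine Finset.sum_congr rfl fun i _ => Finset.sum_congr rfl fun j _ => ?_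
  simp only [Complex.mul_re, Complex.star_def, Complex.conj_re, Complex.conj_im,
    Complex.ofReal_re, Complex.ofReal_im, Complex.im_ofReal_mul]
  ring

lemma PosSemidef.map_ofReal {M : Matrix n n ℝ} (hM : M.PosSemidef) :
    (M.map ((↑) : ℝ → ℂ)).PosSemidef := by
  refine .of_dotProduct_mulVec_nonneg hM.isHermitian.map_ofReal fun x =>
    Complex.nonneg_iff.mpr ⟨?_, ?_⟩
  · rw [re_star_dotProduct_map_ofReal_mulVec]
    exact add_nonneg (by simpa using hM.dotProduct_mulVec_nonneg _)
      (by simpa using hM.dotProduct_mulVec_nonneg _)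
  · exact (hM.isHermitian.map_ofReal.im_star_dotProduct_mulVec_self x).symm

lemma PosDef.map_ofReal {M : Matrix n n ℝ} (hM : M.PosDef) :
    (M.map ((↑) : ℝ → ℂ)).PosDef := by
  refine .of_dotProduct_mulVec_pos hM.isHermitian.map_ofReal fun x hx =>
    Complex.pos_iff.mpr ⟨?_, ?_⟩
  · have hre_or_him : (fun i => (x i).re) ≠ 0 ∨ (fun i => (x i).im) ≠ 0 := by
      contrapose! hx
      exact funext fun i => Complex.ext (congrFun hx.1 i) (congrFun hx.2 i)
    have nonneg (v : n → ℝ) : 0 ≤ v ⬝ᵥ M *ᵥ v := by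
      simpa using hM.posSemidef.dotProduct_mulVec_nonneg v
    have pos {v : n → ℝ} (hv : v ≠ 0) : 0 < v ⬝ᵥ M *ᵥ v := by
      simpa using hM.dotProduct_mulVec_pos hv
    rw [re_star_dotProduct_map_ofReal_mulVec]
    rcases hre_or_him with h | h
    · exact add_pos_of_pos_of_nonneg (pos h) (nonneg _)
    · exact add_pos_of_nonneg_of_pos (nonneg _) (pos h)
  · exact (hM.isHermitian.map_ofReal.im_star_dotProduct_mulVec_self x).symm

end Matrix

namespace Complex

lemma im_eq_of_neg_mul_add_add_I_div_mul_eq_zero {a b γ c : ℂ} {k : ℝ} (ha : 0 < a)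
    (hb : b.im = 0) (hγ : γ.im = 0) (hk : k ≠ 0) (h : -c * a + b + I / k * γ = 0) :
    c.im = γ.re / (k * a.re) := by
  obtain ⟨ha_re, ha_im⟩ := pos_iff.mp ha
  have him := congrArg im h
  simp only [neg_mul, add_im, neg_im, mul_im, ← ha_im, mul_zero, zero_add, hb, add_zero,
    div_re, I_re, ofReal_re, zero_mul, normSq_ofReal, zero_div, I_im, ofReal_im, hγ, div_im,
    one_mul, div_self_mul_self', sub_zero, zero_im] at him
  field_simp at him ⊢
  linarith

end Complex

theorem stmt_9_general (n : ℕ) (A B C : Matrix (Fin n) (Fin n) ℝ)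
    (hA : A.PosDef) (hB : B.IsSymm) (hC : (-C).PosSemidef)
    (k : ℝ) (hk : 0 < k) (c : ℂ) (U : Fin n → ℂ) (hU : U ≠ 0)
    (heq : ((-c) • A.map Complex.ofReal + B.map Complex.ofReal
      + (Complex.I / (k : ℂ)) • C.map Complex.ofReal).mulVec U = 0) :
    c.im = (star U ⬝ᵥ (C.map Complex.ofReal).mulVec U).re /
      (k * (star U ⬝ᵥ (A.map Complex.ofReal).mulVec U).re) ∧
    c.im ≤ 0 := by
  set a := star U ⬝ᵥ (A.map Complex.ofReal).mulVec U
  set b := star U ⬝ᵥ (B.map Complex.ofReal).mulVec U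
  set γ := star U ⬝ᵥ (C.map Complex.ofReal).mulVec U
  have ha : 0 < a := hA.map_ofReal.dotProduct_mulVec_pos hU
  have hb : b.im = 0 :=
    (Matrix.isHermitian_iff_isSymm.mpr hB).map_ofReal.im_star_dotProduct_mulVec_self U
  have hγ : γ ≤ 0 := by
    simpa [Matrix.map_neg, Matrix.neg_mulVec] using hC.map_ofReal.dotProduct_mulVec_nonneg U
  have hdisp : -c * a + b + Complex.I / k * γ = 0 := by
    simpa only [Matrix.add_mulVec, Matrix.smul_mulVec, dotProduct_add, dotProduct_smul,
      smul_eq_mul, dotProduct_zero] using congrArg (star U ⬝ᵥ ·) heq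
  have him := Complex.im_eq_of_neg_mul_add_add_I_div_mul_eq_zero ha hb
    (Complex.nonpos_iff.mp hγ).2 hk.ne' hdisp
  exact ⟨him, him ▸ div_nonpos_of_nonpos_of_nonneg (Complex.nonpos_iff.mp hγ).1
    (mul_pos hk (Complex.pos_iff.mp ha).1).le⟩

/-- Linear stability of the dispersion relation: if `A` is symmetric positive definite,
`B` symmetric, `C` symmetric negative semidefinite, `k > 0`, and a nonzero complex vector
`U` satisfies `(−c·A + B + (i/k)·C)·U = 0`, then
`Im(c) = Re(U* C U)/(k · U* A U) ≤ 0`. -/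
theorem stmt_9 (n : ℕ) (hn : 1 ≤ n) (A B C : Matrix (Fin n) (Fin n) ℝ)
    (hA : A.PosDef) (hB : B.IsSymm) (hC : (-C).PosSemidef)
    (k : ℝ) (hk : 0 < k) (c : ℂ) (U : Fin n → ℂ) (hU : U ≠ 0)
    (heq : ((-c) • A.map Complex.ofReal + B.map Complex.ofReal
      + (Complex.I / (k : ℂ)) • C.map Complex.ofReal).mulVec U = 0) :
    c.im = (star U ⬝ᵥ (C.map Complex.ofReal).mulVec U).re /
      (k * (star U ⬝ᵥ (A.map Complex.ofReal).mulVec U).re) ∧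
    c.im ≤ 0 :=
  stmt_9_general n A B C hA hB hC k hk c U hU heq
end

section
/- Consider a polytropic gas: γ > 1, c_V > 0, and for a state (ρ, η) with ρ > 0 set p(ρ,η) = ρ^γ e^{η/c_V} and θ(ρ,η) = ρ^{γ−1} e^{η/c_V}/((γ−1)c_V). Let ϰ ≠ 0 and let (ρ_L, u_L, η_L, j_L) and (ρ_R, u_R, η_R, j_R) with ρ_L, ρ_R > 0 be two states separated by a discontinuity of speed 𝒟, and write p_i = p(ρ_i, η_i), θ_i = θ(ρ_i, η_i). Assume the mass flux vanishes on both sides, ρ_L(u_L − 𝒟) = 0 and ρ_R(u_R − 𝒟) = 0, and that the Rankine–Hugoniot conditions hold: p_L = p_R, ϰ²·θ_L·j_L/ρ_L = ϰ²·θ_R·j_R/ρ_R, and θ_L = θ_R. Then ρ_L = ρ_R, u_L = u_R, η_L = η_R and j_L = j_R; i.e. no nontrivial contact discontinuity exists. -/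
/-- Non-existence of contact discontinuities for the hyperbolic heat-conduction model with a
polytropic gas: if the mass flux vanishes on both sides of a discontinuity of speed `𝒟` and the
Rankine–Hugoniot conditions `⟦p⟧ = 0`, `⟦ϰ²θj/ρ⟧ = 0`, `⟦θ⟧ = 0` hold (with
`p = ρ^γ e^{η/c_V}` and `θ = ρ^{γ−1} e^{η/c_V}/((γ−1)c_V)`), then both states coincide. -/
theorem stmt_11 (γ c_V ϰ D ρL uL ηL jL ρR uR ηR jR : ℝ)
    (hγ : 1 < γ) (hcV : 0 < c_V) (hϰ : ϰ ≠ 0)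
    (hρL : 0 < ρL) (hρR : 0 < ρR)
    (hML : ρL * (uL - D) = 0) (hMR : ρR * (uR - D) = 0)
    (hp : ρL ^ γ * Real.exp (ηL / c_V) = ρR ^ γ * Real.exp (ηR / c_V))
    (hθj : ϰ ^ 2 * (ρL ^ (γ - 1) * Real.exp (ηL / c_V) / ((γ - 1) * c_V)) * jL / ρL
         = ϰ ^ 2 * (ρR ^ (γ - 1) * Real.exp (ηR / c_V) / ((γ - 1) * c_V)) * jR / ρR)
    (hθ : ρL ^ (γ - 1) * Real.exp (ηL / c_V) / ((γ - 1) * c_V)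
        = ρR ^ (γ - 1) * Real.exp (ηR / c_V) / ((γ - 1) * c_V)) :
    ρL = ρR ∧ uL = uR ∧ ηL = ηR ∧ jL = jR := by
  have hγ1 : γ - 1 ≠ 0 := sub_ne_zero.mpr (ne_of_gt hγ)
  have hden : (γ - 1) * c_V ≠ 0 := mul_ne_zero hγ1 (ne_of_gt hcV)
  have huL : uL = D := by
    have := (mul_eq_zero.mp hML).resolve_left (ne_of_gt hρL)
    linarith [sub_eq_zero.mp this]
  have huR : uR = D := by
    have := (mul_eq_zero.mp hMR).resolve_left (ne_of_gt hρR)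
    linarith [sub_eq_zero.mp this]
  -- θ equality without the denominator
  have hθ' : ρL ^ (γ - 1) * Real.exp (ηL / c_V) = ρR ^ (γ - 1) * Real.exp (ηR / c_V) := by
    field_simp at hθ
    exact hθ
  have hEL : 0 < Real.exp (ηL / c_V) := Real.exp_pos _
  have hER : 0 < Real.exp (ηR / c_V) := Real.exp_pos _
  have hpowL : (0:ℝ) < ρL ^ (γ - 1) := Real.rpow_pos_of_pos hρL _
  have hpowR : (0:ℝ) < ρR ^ (γ - 1) := Real.rpow_pos_of_pos hρR _
  -- rewrite ρ^γ = ρ^(γ-1) * ρ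
  have hgsplit : γ = (γ - 1) + 1 := by ring
  have hsplitL : ρL ^ γ = ρL ^ (γ - 1) * ρL := by
    nth_rewrite 1 [hgsplit]; rw [Real.rpow_add_one (ne_of_gt hρL)]
  have hsplitR : ρR ^ γ = ρR ^ (γ - 1) * ρR := by
    nth_rewrite 1 [hgsplit]; rw [Real.rpow_add_one (ne_of_gt hρR)]
  have hp' : ρL ^ (γ - 1) * Real.exp (ηL / c_V) * ρL
      = ρR ^ (γ - 1) * Real.exp (ηR / c_V) * ρR := by
    rw [hsplitL, hsplitR] at hp; ring_nf at hp ⊢; linarith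
  have hρ : ρL = ρR := by
    rw [hθ'] at hp'
    exact mul_left_cancel₀ (ne_of_gt (mul_pos hpowR hER)) hp'
  have hη : ηL = ηR := by
    rw [hρ] at hθ'
    have hE : Real.exp (ηL / c_V) = Real.exp (ηR / c_V) :=
      mul_left_cancel₀ (ne_of_gt hpowR) hθ'
    have h2 := Real.exp_injective hE
    field_simp at h2; exact h2
  have hj : jL = jR := by
    rw [hρ, hη] at hθj
    have hne : ϰ ^ 2 * (ρR ^ (γ - 1) * Real.exp (ηR / c_V) / ((γ - 1) * c_V)) / ρR ≠ 0 := by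
      apply div_ne_zero _ (ne_of_gt hρR)
      exact mul_ne_zero (pow_ne_zero _ hϰ)
        (div_ne_zero (ne_of_gt (mul_pos hpowR hER)) hden)
    have : ϰ ^ 2 * (ρR ^ (γ - 1) * Real.exp (ηR / c_V) / ((γ - 1) * c_V)) / ρR * jL
        = ϰ ^ 2 * (ρR ^ (γ - 1) * Real.exp (ηR / c_V) / ((γ - 1) * c_V)) / ρR * jR := by
      linear_combination hθj
    exact mul_left_cancel₀ hne this
  exact ⟨hρ, huL.trans huR.symm, hη, hj⟩
end

section
/- Let ϰ ∈ ℝ and let two states (ρ_L, u_L, ε_L, p_L, θ_L, j_L) and (ρ_R, u_R, ε_R, p_R, θ_R, j_R) with ρ_L, ρ_R > 0 and a discontinuity speed 𝒟 be given; set v_i = 1/ρ_i and suppose the mass flux ℳ := ρ_L(u_L − 𝒟) = ρ_R(u_R − 𝒟) satisfies ℳ ≠ 0. Assume the Rankine–Hugoniot conditions: p_R + ℳ²v_R = p_L + ℳ²v_L; ℳ(ℳ²v_R²/2 + ε_R + p_R v_R + (ϰ²/2)v_R²j_R²) + ϰ²v_Rθ_Rj_R = ℳ(ℳ²v_L²/2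 + ε_L + p_L v_L + (ϰ²/2)v_L²j_L²) + ϰ²v_Lθ_Lj_L; and ℳ v_R j_R + θ_R = ℳ v_L j_L + θ_L. If moreover p_R ≠ p_L, then v_R ≠ v_L, ℳ² = −(p_R − p_L)/(v_R − v_L), and the Hugoniot relation holds: ε_R − ε_L + (1/2)(p_R + p_L)(v_R − v_L) + (ϰ²/2)(v_R − v_L)(θ_R² − θ_L²)/(p_R − p_L) = 0. -/
/-! The momentum condition alone gives `ℳ² ⟦v⟧ = -⟦p⟧`, so `⟦p⟧ ≠ 0` forces `⟦v⟧ ≠ 0` and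
determines `ℳ²`. In the energy condition (multiplied by `2ℳ`) the heat-flux terms are
`ϰ²((ℳ v j)² + 2 (ℳ v j) θ)` on each side; completing the square with the conserved quantity
`ℳ v j + θ` turns their jump into `ϰ² (θ_L² - θ_R²)`. Eliminating `ℳ²` with the momentum
relation then leaves the Hugoniot relation. -/

namespace RankineHugoniot

variable {K : Type*} [Field K] {M pL pR vL vR : K}

theorem sq_mul_sub_eq (hmom : pR + M ^ 2 * vR = pL + M ^ 2 * vL) :
    M ^ 2 * (vR - vL) = -(pR - pL) := by
  linear_combination hmom

theorem ne_of_momentum (hmom : pR + M ^ 2 * vR = pL + M ^ 2 * vL) (hp : pR ≠ pL) :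
    vR ≠ vL := by
  rintro rfl
  exact hp (add_right_cancel hmom)

theorem sq_eq_neg_div (hmom : pR + M ^ 2 * vR = pL + M ^ 2 * vL) (hp : pR ≠ pL) :
    M ^ 2 = -(pR - pL) / (vR - vL) :=
  (eq_div_iff (sub_ne_zero.mpr (ne_of_momentum hmom hp))).mpr (sq_mul_sub_eq hmom)

variable [CharZero K]

theorem energy_jump {ϰ εL εR θL θR jL jR : K}
    (hene : M * (M ^ 2 * vR ^ 2 / 2 + εR + pR * vR + (ϰ ^ 2 / 2) * vR ^ 2 * jR ^ 2)
        + ϰ ^ 2 * vR * θR * jR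
      = M * (M ^ 2 * vL ^ 2 / 2 + εL + pL * vL + (ϰ ^ 2 / 2) * vL ^ 2 * jL ^ 2)
        + ϰ ^ 2 * vL * θL * jL)
    (hj : M * vR * jR + θR = M * vL * jL + θL) :
    2 * M ^ 2 * (εR - εL) + M ^ 4 * (vR ^ 2 - vL ^ 2) + 2 * M ^ 2 * (pR * vR - pL * vL)
      = ϰ ^ 2 * (θR ^ 2 - θL ^ 2) := by
  linear_combination 2 * M * hene - ϰ ^ 2 * (M * vR * jR + M * vL * jL + θR + θL) * hj

theorem hugoniot {ϰ εL εR θL θR : K} (hM : M ≠ 0) (hp : pR ≠ pL)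
    (hmom : pR + M ^ 2 * vR = pL + M ^ 2 * vL)
    (henergy : 2 * M ^ 2 * (εR - εL) + M ^ 4 * (vR ^ 2 - vL ^ 2)
      + 2 * M ^ 2 * (pR * vR - pL * vL) = ϰ ^ 2 * (θR ^ 2 - θL ^ 2)) :
    εR - εL + (1 / 2) * (pR + pL) * (vR - vL)
      + (ϰ ^ 2 / 2) * (vR - vL) * (θR ^ 2 - θL ^ 2) / (pR - pL) = 0 := by
  have hΔ := sq_mul_sub_eq hmom
  have hreduced : 2 * M ^ 2 * ((pR - pL) * (εR - εL) + (pR - pL) * (pR + pL) * (vR - vL) / 2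
      + ϰ ^ 2 * (vR - vL) * (θR ^ 2 - θL ^ 2) / 2) = 0 := by
    linear_combination (pR - pL) * henergy
      + (ϰ ^ 2 * (θR ^ 2 - θL ^ 2) - M ^ 2 * (pR - pL) * (vR + vL)) * hΔ
  have h2M : (2 : K) * M ^ 2 ≠ 0 := mul_ne_zero two_ne_zero (pow_ne_zero 2 hM)
  have hpne : pR - pL ≠ 0 := sub_ne_zero.mpr hp
  field_simp
  linear_combination 2 * (mul_eq_zero.mp hreduced).resolve_left h2M

end RankineHugoniot

open RankineHugoniot in
theorem stmt_12_general (ϰ M εL pL θL jL εR pR θR jR vL vR : ℝ)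
    (hM : M ≠ 0)
    (hmom : pR + M ^ 2 * vR = pL + M ^ 2 * vL)
    (hene : M * (M ^ 2 * vR ^ 2 / 2 + εR + pR * vR + (ϰ ^ 2 / 2) * vR ^ 2 * jR ^ 2)
        + ϰ ^ 2 * vR * θR * jR
      = M * (M ^ 2 * vL ^ 2 / 2 + εL + pL * vL + (ϰ ^ 2 / 2) * vL ^ 2 * jL ^ 2)
        + ϰ ^ 2 * vL * θL * jL)
    (hj : M * vR * jR + θR = M * vL * jL + θL)
    (hp : pR ≠ pL) :
    vR ≠ vL ∧ M ^ 2 = -(pR - pL) / (vR - vL) ∧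
    εR - εL + (1 / 2) * (pR + pL) * (vR - vL)
      + (ϰ ^ 2 / 2) * (vR - vL) * (θR ^ 2 - θL ^ 2) / (pR - pL) = 0 :=
  ⟨ne_of_momentum hmom hp, sq_eq_neg_div hmom hp,
    hugoniot hM hp hmom (energy_jump hene hj)⟩

/-- Consequence of the Rankine–Hugoniot conditions of the hyperbolic heat-conduction model
(with `α(ρ) = ϰ²/ρ`) across a discontinuity with nonzero mass flux `ℳ`: if `p_R ≠ p_L` then
`v_R ≠ v_L`, `ℳ² = −⟦p⟧/⟦v⟧`, and the Hugoniot relation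
`ε_R − ε_L + ½(p_R+p_L)(v_R−v_L) + (ϰ²/2)(v_R−v_L)(θ_R²−θ_L²)/(p_R−p_L) = 0` holds. -/
theorem stmt_12 (ϰ D M ρL uL εL pL θL jL ρR uR εR pR θR jR vL vR : ℝ)
    (hρL : 0 < ρL) (hρR : 0 < ρR)
    (hvL : vL = 1 / ρL) (hvR : vR = 1 / ρR)
    (hML : M = ρL * (uL - D)) (hMR : M = ρR * (uR - D)) (hM : M ≠ 0)
    (hmom : pR + M ^ 2 * vR = pL + M ^ 2 * vL)
    (hene : M * (M ^ 2 * vR ^ 2 / 2 + εR + pR * vR + (ϰ ^ 2 / 2) * vR ^ 2 * jR ^ 2)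
        + ϰ ^ 2 * vR * θR * jR
      = M * (M ^ 2 * vL ^ 2 / 2 + εL + pL * vL + (ϰ ^ 2 / 2) * vL ^ 2 * jL ^ 2)
        + ϰ ^ 2 * vL * θL * jL)
    (hj : M * vR * jR + θR = M * vL * jL + θL)
    (hp : pR ≠ pL) :
    vR ≠ vL ∧ M ^ 2 = -(pR - pL) / (vR - vL) ∧
    εR - εL + (1 / 2) * (pR + pL) * (vR - vL)
      + (ϰ ^ 2 / 2) * (vR - vL) * (θR ^ 2 - θL ^ 2) / (pR - pL) = 0 :=
  stmt_12_general ϰ M εL pL θL jL εR pR θR jR vL vR hM hmom hene hj hp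
end

section
/- Let ϰ̃ ∈ ℝ and ṽ > 0, and define D(ṽ) = ṽ(ϰ̃²(ṽ−1)ṽ + 3) − 1 and p̃^±(ṽ) = (ṽ + 1 ± (1 − ṽ)·√(ϰ̃⁴ṽ² + ϰ̃²(ṽ−1)² + 4)) / D(ṽ). Suppose D(ṽ) ≠ 0 and p̃ := p̃^+(ṽ) ≠ 1 (respectively p̃ := p̃^−(ṽ) ≠ 1). Then p̃ satisfies the dimensionless Hugoniot relation with center (1,1) for γ = 2: (ṽ·p̃ − 1) + (1/2)(p̃ + 1)(ṽ − 1) + (ϰ̃²/2)·((ṽ·p̃)² − 1)(ṽ − 1)/(p̃ − 1) = 0. -/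
/-!
Multiplied by `2 (p - 1)`, the Hugoniot relation becomes the quadratic equation
`D p² - 2 (v + 1) p + (3 - v - ϰ² (v - 1)) = 0`, whose discriminant is
`4 (1 - v)² (ϰ⁴ v² + ϰ² (v - 1)² + 4)`; the acoustic and thermal branches are its two roots.
-/

section Hugoniot

variable (ϰ v : ℝ)

theorem hugoniot_eq_zero_iff_quadratic {p : ℝ} (hp : p ≠ 1) :
    (v * p - 1) + (1 / 2) * (p + 1) * (v - 1)
        + (ϰ ^ 2 / 2) * ((v * p) ^ 2 - 1) * (v - 1) / (p - 1) = 0 ↔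
      (v * (ϰ ^ 2 * (v - 1) * v + 3) - 1) * (p * p) + -(2 * (v + 1)) * p
        + (3 - v - ϰ ^ 2 * (v - 1)) = 0 := by
  have hp' : p - 1 ≠ 0 := sub_ne_zero.mpr hp
  constructor <;> intro h
  · field_simp at h
    linear_combination h
  · field_simp
    linear_combination h

theorem discrim_hugoniot_quadratic :
    discrim (v * (ϰ ^ 2 * (v - 1) * v + 3) - 1) (-(2 * (v + 1))) (3 - v - ϰ ^ 2 * (v - 1)) =
      (2 * (1 - v) * Real.sqrt (ϰ ^ 4 * v ^ 2 + ϰ ^ 2 * (v - 1) ^ 2 + 4)) *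
        (2 * (1 - v) * Real.sqrt (ϰ ^ 4 * v ^ 2 + ϰ ^ 2 * (v - 1) ^ 2 + 4)) := by
  have hs : Real.sqrt (ϰ ^ 4 * v ^ 2 + ϰ ^ 2 * (v - 1) ^ 2 + 4) ^ 2
      = ϰ ^ 4 * v ^ 2 + ϰ ^ 2 * (v - 1) ^ 2 + 4 := Real.sq_sqrt (by positivity)
  rw [discrim]
  linear_combination (-4 * (1 - v) ^ 2) * hs

end Hugoniot

theorem stmt_14_general (ϰ v : ℝ)
    (hD : v * (ϰ ^ 2 * (v - 1) * v + 3) - 1 ≠ 0) :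
    (∀ p : ℝ,
      p = (v + 1 + (1 - v) * Real.sqrt (ϰ ^ 4 * v ^ 2 + ϰ ^ 2 * (v - 1) ^ 2 + 4)) /
          (v * (ϰ ^ 2 * (v - 1) * v + 3) - 1) →
      p ≠ 1 →
      (v * p - 1) + (1 / 2) * (p + 1) * (v - 1)
        + (ϰ ^ 2 / 2) * ((v * p) ^ 2 - 1) * (v - 1) / (p - 1) = 0) ∧
    (∀ p : ℝ,
      p = (v + 1 - (1 - v) * Real.sqrt (ϰ ^ 4 * v ^ 2 + ϰ ^ 2 * (v - 1) ^ 2 + 4)) /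
          (v * (ϰ ^ 2 * (v - 1) * v + 3) - 1) →
      p ≠ 1 →
      (v * p - 1) + (1 / 2) * (p + 1) * (v - 1)
        + (ϰ ^ 2 / 2) * ((v * p) ^ 2 - 1) * (v - 1) / (p - 1) = 0) := by
  have roots := quadratic_eq_zero_iff hD (discrim_hugoniot_quadratic ϰ v)
  constructor
  · rintro p rfl hp
    rw [hugoniot_eq_zero_iff_quadratic ϰ v hp, roots]
    left
    field_simp
  · rintro p rfl hp
    rw [hugoniot_eq_zero_iff_quadratic ϰ v hp, roots]
    right
    field_simp

/-- The two explicit branches `p̃^±(ṽ)` satisfy the dimensionless Hugoniot relation with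
center `(1,1)` for a polytropic gas with `γ = 2` in the hyperbolic heat-conduction model,
whenever the denominator `D(ṽ)` is nonzero and `p̃^± ≠ 1`. -/
theorem stmt_14 (ϰ v : ℝ) (hv : 0 < v)
    (hD : v * (ϰ ^ 2 * (v - 1) * v + 3) - 1 ≠ 0) :
    (∀ p : ℝ,
      p = (v + 1 + (1 - v) * Real.sqrt (ϰ ^ 4 * v ^ 2 + ϰ ^ 2 * (v - 1) ^ 2 + 4)) /
          (v * (ϰ ^ 2 * (v - 1) * v + 3) - 1) →
      p ≠ 1 →
      (v * p - 1) + (1 / 2) * (p + 1) * (v - 1)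
        + (ϰ ^ 2 / 2) * ((v * p) ^ 2 - 1) * (v - 1) / (p - 1) = 0) ∧
    (∀ p : ℝ,
      p = (v + 1 - (1 - v) * Real.sqrt (ϰ ^ 4 * v ^ 2 + ϰ ^ 2 * (v - 1) ^ 2 + 4)) /
          (v * (ϰ ^ 2 * (v - 1) * v + 3) - 1) →
      p ≠ 1 →
      (v * p - 1) + (1 / 2) * (p + 1) * (v - 1)
        + (ϰ ^ 2 / 2) * ((v * p) ^ 2 - 1) * (v - 1) / (p - 1) = 0) :=
  stmt_14_general ϰ v hD
end

section
/- Define G : (0,∞) → ℝ by G(ϰ) = 2ϰ⁴/√(ϰ⁴+4) − 4ϰ² + (ϰ²+3)² − (ϰ²+3)(√(ϰ⁴+4) + 1). Then there exists a unique ϰ_c > 0 such that G(ϰ_c) = 0; moreover G(ϰ) < 0 for all 0 < ϰ < ϰ_c, G(ϰ) > 0 for all ϰ > ϰ_c, and 1.039 < ϰ_c < 1.041. -/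
/-!
Rationalising the square root `s = √(ϰ⁴+4)`: one has `s · G(ϰ) = s B − P` with
`B = ϰ⁴+ϰ²+6`, `P = ϰ⁶+ϰ⁴+4ϰ²+12` both positive, and `s²B² − P² = 4ϰ² Q(ϰ)` for the even
polynomial `Q(x) = 2x⁶ − 3x⁴ + 12x² − 12`. Hence `G` has the sign of `Q` for `ϰ ≠ 0`. As a cubic
in `t = x²`, `Q` is strictly increasing, so it has a single positive root, which the
intermediate value theorem locates in `(1.039, 1.041)`.
-/

noncomputable def hugoniotG (ϰ : ℝ) : ℝ :=
  2 * ϰ ^ 4 / √(ϰ ^ 4 + 4) - 4 * ϰ ^ 2 + (ϰ ^ 2 + 3) ^ 2 - (ϰ ^ 2 + 3) * (√(ϰ ^ 4 + 4) + 1)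

def hugoniotQ (x : ℝ) : ℝ := 2 * x ^ 6 - 3 * x ^ 4 + 12 * x ^ 2 - 12

theorem hugoniotG_eq_div (ϰ : ℝ) :
    hugoniotG ϰ = 4 * ϰ ^ 2 * hugoniotQ ϰ /
      (√(ϰ ^ 4 + 4) * (√(ϰ ^ 4 + 4) * (ϰ ^ 4 + ϰ ^ 2 + 6) + (ϰ ^ 6 + ϰ ^ 4 + 4 * ϰ ^ 2 + 12))) := by
  have hs : √(ϰ ^ 4 + 4) ^ 2 = ϰ ^ 4 + 4 := Real.sq_sqrt (by positivity)
  have hs_pos : 0 < √(ϰ ^ 4 + 4) := Real.sqrt_pos.2 (by positivity)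
  rw [eq_div_iff (by positivity), hugoniotG, hugoniotQ]
  field_simp
  -- modulo `s² = ϰ⁴ + 4`, the cleared numerator of `G` is `(sB − P) − (ϰ² + 3)(s² − (ϰ⁴ + 4))`
  linear_combination ((ϰ ^ 4 + ϰ ^ 2 + 6) ^ 2 - (ϰ ^ 2 + 3) *
    (√(ϰ ^ 4 + 4) * (ϰ ^ 4 + ϰ ^ 2 + 6) + (ϰ ^ 6 + ϰ ^ 4 + 4 * ϰ ^ 2 + 12))) * hs

theorem sign_hugoniotG {ϰ : ℝ} (hϰ : ϰ ≠ 0) :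
    SignType.sign (hugoniotG ϰ) = SignType.sign (hugoniotQ ϰ) := by
  have hden : 0 < √(ϰ ^ 4 + 4) *
      (√(ϰ ^ 4 + 4) * (ϰ ^ 4 + ϰ ^ 2 + 6) + (ϰ ^ 6 + ϰ ^ 4 + 4 * ϰ ^ 2 + 12)) := by
    have : 0 < √(ϰ ^ 4 + 4) := Real.sqrt_pos.2 (by positivity)
    positivity
  rw [hugoniotG_eq_div, div_eq_mul_inv, sign_mul, sign_mul, sign_pos (inv_pos.2 hden),
    sign_pos (by positivity : (0 : ℝ) < 4 * ϰ ^ 2), one_mul, mul_one]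

theorem strictMono_hugoniot_cubic :
    StrictMono fun t : ℝ => 2 * t ^ 3 - 3 * t ^ 2 + 12 * t - 12 := by
  intro a b hab
  have hquad : 0 < 2 * (a ^ 2 + a * b + b ^ 2) - 3 * (a + b) + 12 := by
    nlinarith [sq_nonneg (a + b - 1), sq_nonneg (a - b)]
  nlinarith [mul_pos (sub_pos.2 hab) hquad]

theorem strictMonoOn_hugoniotQ : StrictMonoOn hugoniotQ (Set.Ici 0) := by
  have hQ : hugoniotQ = (fun t : ℝ => 2 * t ^ 3 - 3 * t ^ 2 + 12 * t - 12) ∘ fun x => x ^ 2 := by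
    funext x; simp only [hugoniotQ, Function.comp]; ring
  rw [hQ]
  exact strictMono_hugoniot_cubic.comp_strictMonoOn (pow_left_strictMonoOn₀ two_ne_zero)

theorem exists_hugoniotQ_eq_zero : ∃ c ∈ Set.Ioo (1.039 : ℝ) 1.041, hugoniotQ c = 0 := by
  refine intermediate_value_Ioo (by norm_num) (by unfold hugoniotQ; fun_prop) ?_
  constructor <;> norm_num [hugoniotQ]

/-- The function `G(ϰ) = 2ϰ⁴/√(ϰ⁴+4) − 4ϰ² + (ϰ²+3)² − (ϰ²+3)(√(ϰ⁴+4)+1)` (the value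
`g̃''(1)` of the thermal Hugoniot branch) has a unique positive zero `ϰ_c`, with `G < 0` on
`(0, ϰ_c)`, `G > 0` on `(ϰ_c, ∞)`, and `1.039 < ϰ_c < 1.041`. -/
theorem stmt_15 (G : ℝ → ℝ)
    (hG : ∀ ϰ : ℝ, G ϰ = 2 * ϰ ^ 4 / Real.sqrt (ϰ ^ 4 + 4) - 4 * ϰ ^ 2 + (ϰ ^ 2 + 3) ^ 2
      - (ϰ ^ 2 + 3) * (Real.sqrt (ϰ ^ 4 + 4) + 1)) :
    ∃ ϰc : ℝ, 0 < ϰc ∧ G ϰc = 0 ∧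
      (∀ ϰ : ℝ, 0 < ϰ → ϰ < ϰc → G ϰ < 0) ∧
      (∀ ϰ : ℝ, ϰc < ϰ → 0 < G ϰ) ∧
      (∀ ϰ' : ℝ, 0 < ϰ' → G ϰ' = 0 → ϰ' = ϰc) ∧
      1.039 < ϰc ∧ ϰc < 1.041 := by
  obtain rfl : G = hugoniotG := funext hG
  obtain ⟨c, ⟨hc_lo, hc_hi⟩, hQc⟩ := exists_hugoniotQ_eq_zero
  have hc_pos : 0 < c := lt_trans (by norm_num) hc_lo
  refine ⟨c, hc_pos, ?_, fun ϰ hϰ hlt => ?_, fun ϰ hlt => ?_, fun ϰ hϰ hG0 => ?_, hc_lo, hc_hi⟩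
  · rw [← sign_eq_zero_iff, sign_hugoniotG hc_pos.ne', hQc, sign_zero]
  · rw [← sign_eq_neg_one_iff, sign_hugoniotG hϰ.ne', sign_eq_neg_one_iff, ← hQc]
    exact strictMonoOn_hugoniotQ hϰ.le hc_pos.le hlt
  · have hϰ : 0 < ϰ := hc_pos.trans hlt
    rw [← sign_eq_one_iff, sign_hugoniotG hϰ.ne', sign_eq_one_iff, ← hQc]
    exact strictMonoOn_hugoniotQ hc_pos.le hϰ.le hlt
  · rw [← sign_eq_zero_iff, sign_hugoniotG hϰ.ne', sign_eq_zero_iff, ← hQc] at hG0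
    exact strictMonoOn_hugoniotQ.injOn hϰ.le hc_pos.le hG0
end

section
/- Let v₀, p₀, ϰ ∈ ℝ, let I be an open interval containing v₀, and let g, θ, η, ε, m : I → ℝ be three times continuously differentiable with g(v₀) = p₀, θ(v₀) = θ₀ > 0, g'(v₀) < 0, and m(v) > 0 for all v ∈ I. Assume: (i) (v − v₀)·m(v) = −(g(v) − p₀) for all v ∈ I (so m(v₀) = −g'(v₀) plays the role of the squared mass flux ℳ²); (ii) the Gibbs identity along the curve: ε'(v) = θ(v)·η'(v) − g(v) for all v ∈ I; (iii) the Hugoniot identity: ε(v) − ε(v₀) + (1/2)(g(v) + p₀)(v − v₀) − (ϰ²/2)·(θ(v)² − θ₀²)/m(v) = 0 for all v ∈ I. Define Ψ(v) = η(v) − η(v₀) − (ϰ²/m(v))·(θ(v) − θ₀). Then Ψ'(v₀) = 0, Ψ''(v₀) = 0, and Ψ'''(v₀) = −(1/(2θ₀))·(1 + ϰ²·θ'(v₀)²/g'(v₀)²)·g''(v₀). -/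
/-!
Differentiating the Hugoniot identity and eliminating `ε'` with the Gibbs identity gives, along
the curve,
  `2 θ Ψ' = (g - p₀ - g' (v - v₀)) + ϰ² (θ - θ₀)² m' / m²`.
The right-hand side vanishes to second order at `v₀`, with second derivative
`-g''(v₀) + 2 ϰ² θ'(v₀)² m'(v₀) / m(v₀)²`, and since `θ₀ ≠ 0` the same is true of `Ψ'`, with
`Ψ'''(v₀)` equal to that value divided by `2 θ₀`. Differentiating the mass relation
`(v - v₀) m = -(g - p₀)` once and twice at `v₀` gives `m(v₀) = -g'(v₀)` and
`m'(v₀) = -g''(v₀) / 2`, which turns this into the stated formula.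
-/

open Filter Topology

section SecondOrderJets

variable {𝕜 : Type*} [NontriviallyNormedField 𝕜] {f g q : 𝕜 → 𝕜} {x : 𝕜}

theorem iteratedDeriv_two_fun_mul (hf : ContDiffAt 𝕜 2 f x) (hg : ContDiffAt 𝕜 2 g x) :
    iteratedDeriv 2 (fun v => f v * g v) x =
      iteratedDeriv 2 f x * g x + 2 * (deriv f x * deriv g x) + f x * iteratedDeriv 2 g x := by
  rw [iteratedDeriv_fun_mul hf hg]
  simp only [Finset.sum_range_succ, Finset.range_one, Finset.sum_singleton, Nat.choose_zero_right,
    Nat.cast_one, iteratedDeriv_zero, one_mul, tsub_zero, Nat.choose_succ_self_right,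
    iteratedDeriv_one, Nat.add_one_sub_one, Nat.choose_self, tsub_self]
  ring

theorem jet_of_mul_eventuallyEq {u P F : 𝕜 → 𝕜} (hu : ContDiffAt 𝕜 2 u x)
    (hP : ContDiffAt 𝕜 2 P x) (hux : u x ≠ 0) (h : (fun v => u v * P v) =ᶠ[𝓝 x] F)
    (hF : F x = 0) (hF' : deriv F x = 0) :
    P x = 0 ∧ deriv P x = 0 ∧ iteratedDeriv 2 P x = iteratedDeriv 2 F x / u x := by
  have hP0 : P x = 0 := by
    have : u x * P x = 0 := h.eq_of_nhds.trans hF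
    exact (mul_eq_zero.mp this).resolve_left hux
  have hP1 : deriv P x = 0 := by
    have : deriv u x * P x + u x * deriv P x = 0 := by
      rw [← deriv_fun_mul (hu.differentiableAt (by norm_num)) (hP.differentiableAt (by norm_num)),
        h.deriv_eq, hF']
    rw [hP0, mul_zero, zero_add] at this
    exact (mul_eq_zero.mp this).resolve_left hux
  refine ⟨hP0, hP1, eq_div_of_mul_eq hux ?_⟩
  rw [← h.iteratedDeriv_eq 2, iteratedDeriv_two_fun_mul hu hP, hP0, hP1]
  ring

theorem jet_of_sub_mul_eventuallyEq (c : 𝕜) (hq : ContDiffAt 𝕜 2 q x)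
    (h : (fun v => (v - x) * q v) =ᶠ[𝓝 x] fun v => -(g v - c)) :
    q x = -deriv g x ∧ 2 * deriv q x = -iteratedDeriv 2 g x := by
  have hx : ContDiffAt 𝕜 2 (fun v => v - x) x := contDiffAt_id.sub contDiffAt_const
  constructor
  · have := h.deriv_eq
    rw [deriv_fun_mul (hx.differentiableAt (by norm_num)) (hq.differentiableAt (by norm_num))]
      at this
    simpa [deriv_sub_const] using this
  · have := h.iteratedDeriv_eq 2
    rw [iteratedDeriv_two_fun_mul hx hq] at this
    simpa [iteratedDeriv_succ', deriv_sub_const_fun] using this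

theorem jet_sub_sub_deriv_mul_sub (hg : ContDiffAt 𝕜 3 g x) :
    deriv (fun v => g v - g x - deriv g v * (v - x)) x = 0 ∧
      iteratedDeriv 2 (fun v => g v - g x - deriv g v * (v - x)) x = -iteratedDeriv 2 g x := by
  have hx : ContDiffAt 𝕜 2 (fun v => v - x) x := contDiffAt_id.sub contDiffAt_const
  have hg' : ContDiffAt 𝕜 2 (deriv g) x := hg.derivWithin (by norm_num)
  constructor
  · have : HasDerivAt (fun v => g v - g x - deriv g v * (v - x))
        (deriv g x - (deriv (deriv g) x * (x - x) + deriv g x * 1)) x :=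
      ((hg.differentiableAt (by norm_num)).hasDerivAt.sub_const (g x)).sub
        ((hg'.differentiableAt (by norm_num)).hasDerivAt.mul ((hasDerivAt_id x).sub_const x))
    simpa using this.deriv
  · rw [iteratedDeriv_fun_sub ((hg.of_le (by norm_num)).sub contDiffAt_const) (hg'.mul hx),
      iteratedDeriv_two_fun_mul hg' hx]
    simp only [iteratedDeriv_succ', deriv_sub_const_fun, iteratedDeriv_zero, sub_self, mul_zero,
      differentiableAt_fun_id, differentiableAt_const, deriv_fun_sub, deriv_id'', deriv_const',
      sub_zero, mul_one, zero_add, iteratedDeriv_fun_const_zero, add_zero]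
    ring

theorem jet_sq_sub_mul (hf : ContDiffAt 𝕜 2 f x) (hq : ContDiffAt 𝕜 2 q x) :
    deriv (fun v => (f v - f x) ^ 2 * q v) x = 0 ∧
      iteratedDeriv 2 (fun v => (f v - f x) ^ 2 * q v) x = 2 * deriv f x ^ 2 * q x := by
  have hd : ContDiffAt 𝕜 2 (fun v => f v - f x) x := hf.sub contDiffAt_const
  have hsq : ContDiffAt 𝕜 2 (fun v => (f v - f x) ^ 2) x := hd.pow 2
  have h1 : deriv (fun v => (f v - f x) ^ 2) x = 0 := by
    simp [deriv_fun_pow (hd.differentiableAt (by norm_num))]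
  have h2 : iteratedDeriv 2 (fun v => (f v - f x) ^ 2) x = 2 * deriv f x ^ 2 := by
    simp only [sq]
    rw [iteratedDeriv_two_fun_mul hd hd]
    simp [deriv_sub_const]
  constructor
  · rw [deriv_fun_mul (hsq.differentiableAt (by norm_num)) (hq.differentiableAt (by norm_num)), h1]
    simp
  · rw [iteratedDeriv_two_fun_mul hsq hq, h1, h2]
    simp

theorem jet_sub_sub_deriv_mul_sub_add_mul_sq_sub_mul (hg : ContDiffAt 𝕜 3 g x)
    (hf : ContDiffAt 𝕜 2 f x) (hq : ContDiffAt 𝕜 2 q x) (c : 𝕜) :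
    deriv (fun v => g v - g x - deriv g v * (v - x) + c * ((f v - f x) ^ 2 * q v)) x = 0 ∧
      iteratedDeriv 2 (fun v => g v - g x - deriv g v * (v - x) + c * ((f v - f x) ^ 2 * q v)) x
        = -iteratedDeriv 2 g x + c * (2 * deriv f x ^ 2 * q x) := by
  have hB : ContDiffAt 𝕜 2 (fun v => g v - g x - deriv g v * (v - x)) x :=
    ((hg.of_le (by norm_num)).sub contDiffAt_const).sub
      ((hg.derivWithin (by norm_num)).mul (contDiffAt_id.sub contDiffAt_const))
  have hC : ContDiffAt 𝕜 2 (fun v => (f v - f x) ^ 2 * q v) x :=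
    ((hf.sub contDiffAt_const).pow 2).mul hq
  obtain ⟨hB1, hB2⟩ := jet_sub_sub_deriv_mul_sub hg
  obtain ⟨hC1, hC2⟩ := jet_sq_sub_mul hf hq
  constructor
  · rw [deriv_fun_add (hB.differentiableAt (by norm_num))
      ((hC.differentiableAt (by norm_num)).const_mul c),
      deriv_const_mul _ (hC.differentiableAt (by norm_num)), hB1, hC1]
    simp
  · rw [iteratedDeriv_fun_add hB (contDiffAt_const.mul hC), iteratedDeriv_const_mul_field,
      hB2, hC2]

end SecondOrderJets

theorem two_mul_mul_deriv_entropyProduction_eq {s : Set ℝ} (hs : IsOpen s)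
    {v₀ p₀ ϰ θ₀ ε₀ η₀ : ℝ} {g θ η ε m : ℝ → ℝ} (hg : DifferentiableOn ℝ g s)
    (hθ : DifferentiableOn ℝ θ s) (hη : DifferentiableOn ℝ η s) (hε : DifferentiableOn ℝ ε s)
    (hm : DifferentiableOn ℝ m s) (hm0 : ∀ v ∈ s, m v ≠ 0)
    (hGibbs : ∀ v ∈ s, deriv ε v = θ v * deriv η v - g v)
    (hHug : ∀ v ∈ s, ε v - ε₀ + (1 / 2) * (g v + p₀) * (v - v₀)
      - (ϰ ^ 2 / 2) * ((θ v) ^ 2 - θ₀ ^ 2) / m v = 0) :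
    ∀ v ∈ s, 2 * θ v * deriv (fun w => η w - η₀ - (ϰ ^ 2 / m w) * (θ w - θ₀)) v =
      g v - p₀ - deriv g v * (v - v₀) + ϰ ^ 2 * ((θ v - θ₀) ^ 2 * (deriv m v / m v ^ 2)) := by
  intro v hv
  have hn := hs.mem_nhds hv
  have hg := (hg.differentiableAt hn).hasDerivAt
  have hθ := (hθ.differentiableAt hn).hasDerivAt
  have hη := (hη.differentiableAt hn).hasDerivAt
  have hε := (hε.differentiableAt hn).hasDerivAt
  have hm' := (hm.differentiableAt hn).hasDerivAt
  have hmv := hm0 v hv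
  have hH : HasDerivAt (fun w => ε w - ε₀ + (1 / 2) * (g w + p₀) * (w - v₀)
      - (ϰ ^ 2 / 2) * ((θ w) ^ 2 - θ₀ ^ 2) / m w)
      (deriv ε v + ((1 / 2) * deriv g v * (v - v₀) + (1 / 2) * (g v + p₀) * 1)
        - (((ϰ ^ 2 / 2) * ((2 : ℕ) * θ v ^ 1 * deriv θ v)) * m v
          - (ϰ ^ 2 / 2) * ((θ v) ^ 2 - θ₀ ^ 2) * deriv m v) / m v ^ 2) v :=
    ((hε.sub_const ε₀).add (((hg.add_const p₀).const_mul (1 / 2)).mul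
      ((hasDerivAt_id v).sub_const v₀))).sub
      (((hθ.pow 2).sub_const (θ₀ ^ 2)).const_mul (ϰ ^ 2 / 2) |>.div hm' hmv)
  have hΨ : HasDerivAt (fun w => η w - η₀ - (ϰ ^ 2 / m w) * (θ w - θ₀))
      (deriv η v - ((0 * m v - ϰ ^ 2 * deriv m v) / m v ^ 2 * (θ v - θ₀)
        + ϰ ^ 2 / m v * deriv θ v)) v :=
    (hη.sub_const η₀).sub (((hasDerivAt_const v (ϰ ^ 2)).div hm' hmv).mul (hθ.sub_const θ₀))
  have hH0 := hH.unique
    ((hasDerivAt_const v 0).congr_of_eventuallyEq (eventually_of_mem hn hHug))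
  rw [hGibbs v hv] at hH0
  rw [hΨ.deriv]
  field_simp at hH0 ⊢
  linear_combination hH0

theorem stmt_16_general (v₀ p₀ ϰ θ₀ a b : ℝ) (hI : v₀ ∈ Set.Ioo a b)
    (g θ η ε m : ℝ → ℝ)
    (hg : ContDiffOn ℝ 3 g (Set.Ioo a b)) (hθ : ContDiffOn ℝ 3 θ (Set.Ioo a b))
    (hη : ContDiffOn ℝ 3 η (Set.Ioo a b)) (hε : ContDiffOn ℝ 3 ε (Set.Ioo a b))
    (hm : ContDiffOn ℝ 3 m (Set.Ioo a b))
    (hg0 : g v₀ = p₀) (hθ0 : θ v₀ = θ₀) (hθ0pos : 0 < θ₀)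
    (hmpos : ∀ v ∈ Set.Ioo a b, 0 < m v)
    (hmass : ∀ v ∈ Set.Ioo a b, (v - v₀) * m v = -(g v - p₀))
    (hGibbs : ∀ v ∈ Set.Ioo a b, deriv ε v = θ v * deriv η v - g v)
    (hHug : ∀ v ∈ Set.Ioo a b, ε v - ε v₀ + (1 / 2) * (g v + p₀) * (v - v₀)
      - (ϰ ^ 2 / 2) * ((θ v) ^ 2 - θ₀ ^ 2) / m v = 0) :
    deriv (fun v => η v - η v₀ - (ϰ ^ 2 / m v) * (θ v - θ₀)) v₀ = 0 ∧
    iteratedDeriv 2 (fun v => η v - η v₀ - (ϰ ^ 2 / m v) * (θ v - θ₀)) v₀ = 0 ∧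
    iteratedDeriv 3 (fun v => η v - η v₀ - (ϰ ^ 2 / m v) * (θ v - θ₀)) v₀
      = -(1 / (2 * θ₀)) * (1 + ϰ ^ 2 * (deriv θ v₀) ^ 2 / (deriv g v₀) ^ 2)
        * iteratedDeriv 2 g v₀ := by
  subst hg0 hθ0
  have hs : Set.Ioo a b ∈ 𝓝 v₀ := isOpen_Ioo.mem_nhds hI
  have hm₀ : m v₀ ≠ 0 := (hmpos v₀ hI).ne'
  have hkey := eventually_of_mem hs <| two_mul_mul_deriv_entropyProduction_eq isOpen_Ioo
    (η₀ := η v₀) (hg.differentiableOn (by norm_num)) (hθ.differentiableOn (by norm_num))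
    (hη.differentiableOn (by norm_num)) (hε.differentiableOn (by norm_num))
    (hm.differentiableOn (by norm_num)) (fun v hv => (hmpos v hv).ne') hGibbs hHug
  obtain ⟨hmg, hm'g⟩ := jet_of_sub_mul_eventuallyEq (g v₀)
    ((hm.contDiffAt hs).of_le (by norm_num)) (eventually_of_mem hs hmass)
  have hq : ContDiffAt ℝ 2 (fun v => deriv m v / m v ^ 2) v₀ :=
    ((hm.contDiffAt hs).derivWithin (by norm_num)).div
      (((hm.contDiffAt hs).of_le (by norm_num)).pow 2) (pow_ne_zero 2 hm₀)
  obtain ⟨hA1, hA2⟩ := jet_sub_sub_deriv_mul_sub_add_mul_sq_sub_mul (hg.contDiffAt hs)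
    ((hθ.contDiffAt hs).of_le (by norm_num)) hq (ϰ ^ 2)
  have hΨ : ContDiffAt ℝ 3 (fun v => η v - η v₀ - (ϰ ^ 2 / m v) * (θ v - θ v₀)) v₀ :=
    ((hη.contDiffAt hs).sub contDiffAt_const).sub
      ((contDiffAt_const.div (hm.contDiffAt hs) hm₀).mul ((hθ.contDiffAt hs).sub contDiffAt_const))
  obtain ⟨hΨ1, hΨ2, hΨ3⟩ := jet_of_mul_eventuallyEq
    (contDiffAt_const.mul ((hθ.contDiffAt hs).of_le (by norm_num))) (hΨ.derivWithin (by norm_num))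
    (by positivity) hkey (by simp) hA1
  refine ⟨hΨ1, by rwa [iteratedDeriv_succ', iteratedDeriv_one], ?_⟩
  rw [iteratedDeriv_succ', hΨ3, hA2, hmg, show deriv m v₀ = -iteratedDeriv 2 g v₀ / 2 by linarith]
  ring

/-- Second-order contact of the entropy-production function `Ψ` with `0` at the center of the
Hugoniot curve: under the mass-flux relation, the Gibbs identity and the Hugoniot identity
along the curve, `Ψ'(v₀) = Ψ''(v₀) = 0` and
`Ψ'''(v₀) = −(1/(2θ₀))(1 + ϰ²θ'(v₀)²/g'(v₀)²)·g''(v₀)`. -/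
theorem stmt_16 (v₀ p₀ ϰ θ₀ a b : ℝ) (hI : v₀ ∈ Set.Ioo a b)
    (g θ η ε m : ℝ → ℝ)
    (hg : ContDiffOn ℝ 3 g (Set.Ioo a b)) (hθ : ContDiffOn ℝ 3 θ (Set.Ioo a b))
    (hη : ContDiffOn ℝ 3 η (Set.Ioo a b)) (hε : ContDiffOn ℝ 3 ε (Set.Ioo a b))
    (hm : ContDiffOn ℝ 3 m (Set.Ioo a b))
    (hg0 : g v₀ = p₀) (hθ0 : θ v₀ = θ₀) (hθ0pos : 0 < θ₀)
    (hg' : deriv g v₀ < 0) (hmpos : ∀ v ∈ Set.Ioo a b, 0 < m v)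
    (hmass : ∀ v ∈ Set.Ioo a b, (v - v₀) * m v = -(g v - p₀))
    (hGibbs : ∀ v ∈ Set.Ioo a b, deriv ε v = θ v * deriv η v - g v)
    (hHug : ∀ v ∈ Set.Ioo a b, ε v - ε v₀ + (1 / 2) * (g v + p₀) * (v - v₀)
      - (ϰ ^ 2 / 2) * ((θ v) ^ 2 - θ₀ ^ 2) / m v = 0) :
    deriv (fun v => η v - η v₀ - (ϰ ^ 2 / m v) * (θ v - θ₀)) v₀ = 0 ∧
    iteratedDeriv 2 (fun v => η v - η v₀ - (ϰ ^ 2 / m v) * (θ v - θ₀)) v₀ = 0 ∧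
    iteratedDeriv 3 (fun v => η v - η v₀ - (ϰ ^ 2 / m v) * (θ v - θ₀)) v₀
      = -(1 / (2 * θ₀)) * (1 + ϰ ^ 2 * (deriv θ v₀) ^ 2 / (deriv g v₀) ^ 2)
        * iteratedDeriv 2 g v₀ :=
  stmt_16_general v₀ p₀ ϰ θ₀ a b hI g θ η ε m hg hθ hη hε hm hg0 hθ0 hθ0pos hmpos hmass hGibbs hHug
end
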